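/- arXiv:2505.00347 — 5 statements merged into one kernel-verified Lean document; each statement's English description precedes it below -/
import Mathlib

section
/- Let y_0 < y_1 < ... < y_N be strictly increasing quantization levels with |y_k| ≤ 1 for all k, let β ∈ [0,1), let Δ_t, Δ_{t+1} > 0 be scale factors, let q be an interior index (0 < q < N) with radius r = (1/2)·min(y_q − y_{q−1}, y_{q+1} − y_q), and let z be a real signal. If r ≥ (1−β)·|z/Δ_{t+1} − y_q| + |Δ_t/Δ_{t+1} − 1|, then the quantized EMA state remains unchanged; that is, setting u = (β·y_q·Δ_t + (1−β)·z)/Δ_{t+1}, one has |u − y_q| ≤ |u − y_k| for every k ∈ {0,...,N}, so q minimizes the nearest-rounding objective. -/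
/-!
The rescaled update `u` satisfies `u - y q = β · y q · (Δt/Δt1 - 1) + (1 - β) · (z/Δt1 - y q)`,
so `|y q| ≤ 1` bounds `|u - y q|` by the left side of the hypothesis, hence by the radius of `y q`.
A point within the radius of a level is at least as close to it as to any other level, because the
neighbouring levels are at least twice the radius away and the levels are monotone.
-/

noncomputable def levelRadius (y : ℕ → ℝ) (q : ℕ) : ℝ :=
  1 / 2 * min (y q - y (q - 1)) (y (q + 1) - y q)

theorem abs_sub_le_abs_sub_of_le_levelRadius {N q k : ℕ} {y : ℕ → ℝ} {u : ℝ}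
    (hy : MonotoneOn y (Set.Iic N)) (hq : q ≤ N) (hu : |u - y q| ≤ levelRadius y q)
    (hk : k ≤ N) : |u - y q| ≤ |u - y k| := by
  have hgap_left := min_le_left (y q - y (q - 1)) (y (q + 1) - y q)
  have hgap_right := min_le_right (y q - y (q - 1)) (y (q + 1) - y q)
  obtain ⟨hu_lo, hu_hi⟩ := abs_le.mp hu
  unfold levelRadius at hu hu_lo hu_hi
  rcases lt_trichotomy k q with hkq | rfl | hqk
  · have : y k ≤ y (q - 1) := hy hk (Set.mem_Iic.mpr (by omega)) (by omega)
    exact hu.trans (by linarith [le_abs_self (u - y k)])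
  · exact le_rfl
  · have : y (q + 1) ≤ y k := hy (Set.mem_Iic.mpr (by omega)) hk hqk
    exact hu.trans (by linarith [neg_abs_le (u - y k)])

theorem abs_ema_div_sub_le {a β Δ Δ' z : ℝ} (ha : |a| ≤ 1) (hβ0 : 0 ≤ β) (hβ1 : β ≤ 1) :
    |(β * a * Δ + (1 - β) * z) / Δ' - a| ≤ (1 - β) * |z / Δ' - a| + |Δ / Δ' - 1| := by
  have hdecomp : (β * a * Δ + (1 - β) * z) / Δ' - a
      = β * a * (Δ / Δ' - 1) + (1 - β) * (z / Δ' - a) := by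
    rw [add_div, mul_div_assoc, mul_div_assoc]; ring
  have hβa : β * |a| ≤ 1 := mul_le_one₀ hβ1 (abs_nonneg a) ha
  calc |(β * a * Δ + (1 - β) * z) / Δ' - a|
      ≤ |β * a * (Δ / Δ' - 1)| + |(1 - β) * (z / Δ' - a)| := hdecomp ▸ abs_add_le _ _
    _ = β * |a| * |Δ / Δ' - 1| + (1 - β) * |z / Δ' - a| := by
        rw [abs_mul, abs_mul, abs_mul, abs_of_nonneg hβ0, abs_of_nonneg (sub_nonneg.mpr hβ1)]
    _ ≤ 1 * |Δ / Δ' - 1| + (1 - β) * |z / Δ' - a| := by gcongr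
    _ = (1 - β) * |z / Δ' - a| + |Δ / Δ' - 1| := by ring

theorem signal_swamping_general
    (N : ℕ) (y : ℕ → ℝ)
    (hmono : ∀ k, k < N → y k < y (k + 1))
    (hbound : ∀ k, k ≤ N → |y k| ≤ 1)
    (β : ℝ) (hβ0 : 0 ≤ β) (hβ1 : β < 1)
    (Δt Δt1 : ℝ)
    (q : ℕ) (hqN : q < N)
    (z : ℝ)
    (hr : (1 - β) * |z / Δt1 - y q| + |Δt / Δt1 - 1|
        ≤ (1 / 2) * min (y q - y (q - 1)) (y (q + 1) - y q)) :
    ∀ k, k ≤ N →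
      |(β * y q * Δt + (1 - β) * z) / Δt1 - y q|
        ≤ |(β * y q * Δt + (1 - β) * z) / Δt1 - y k| := by
  intro k hk
  have hy : MonotoneOn y (Set.Iic N) := (strictMonoOn_Iic_of_lt_succ hmono).monotoneOn
  have hclose : |(β * y q * Δt + (1 - β) * z) / Δt1 - y q| ≤ levelRadius y q :=
    (abs_ema_div_sub_le (hbound q hqN.le) hβ0 hβ1.le).trans hr
  exact abs_sub_le_abs_sub_of_le_levelRadius hy hqN.le hclose hk

/-- **Signal Swamping** (Theorem 3.1).
Let `y 0 < y 1 < ... < y N` be strictly increasing quantization levels with `|y k| ≤ 1`,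
`β ∈ [0,1)`, `Δt, Δt1 > 0` scale factors, `q` an interior index with radius
`r = (1/2) · min (y q − y (q−1)) (y (q+1) − y q)`, and `z` a real signal.
If `r ≥ (1−β)·|z/Δt1 − y q| + |Δt/Δt1 − 1|`, then the quantized EMA state remains
unchanged: with `u = (β·y q·Δt + (1−β)·z)/Δt1`, the level `y q` is a nearest level to `u`. -/
theorem signal_swamping
    (N : ℕ) (y : ℕ → ℝ)
    (hmono : ∀ k, k < N → y k < y (k + 1))
    (hbound : ∀ k, k ≤ N → |y k| ≤ 1)
    (β : ℝ) (hβ0 : 0 ≤ β) (hβ1 : β < 1)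
    (Δt Δt1 : ℝ) (hΔt : 0 < Δt) (hΔt1 : 0 < Δt1)
    (q : ℕ) (hq0 : 0 < q) (hqN : q < N)
    (z : ℝ)
    (hr : (1 - β) * |z / Δt1 - y q| + |Δt / Δt1 - 1|
        ≤ (1 / 2) * min (y q - y (q - 1)) (y (q + 1) - y q)) :
    ∀ k, k ≤ N →
      |(β * y q * Δt + (1 - β) * z) / Δt1 - y q|
        ≤ |(β * y q * Δt + (1 - β) * z) / Δt1 - y k| :=
  signal_swamping_general N y hmono hbound β hβ0 hβ1 Δt Δt1 q hqN z hr
end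

section
/- Let y_0 < y_1 < ... < y_N be strictly increasing quantization levels contained in [−1, 1], let β ∈ [0,1), let Δ > 0 be a scale factor that is unchanged across the update (Δ_{t+1} = Δ_t = Δ), and let q be an interior index (0 < q < N) whose radius r_q = (1/2)·min(y_q − y_{q−1}, y_{q+1} − y_q) satisfies r_q ≥ 2(1−β). Then for every signal z with |z| ≤ Δ, the quantized state remains unchanged: setting u = (β·y_q·Δ + (1−β)·z)/Δ, one has |u − y_q| ≤ |u − y_k| for every k ∈ {0,...,N}. -/
/-! The EMA step moves the dequantized level `y q` by `(1 - β) (z / Δ - y q)`, which has size at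
most `2 (1 - β) ≤ r_q` because both `z / Δ` and `y q` lie in `[-1, 1]`. Every other level is at
distance at least `2 r_q` from `y q`, so by the triangle inequality `y q` stays the nearest level. -/

lemma dist_le_dist_of_two_mul_le {X : Type*} [PseudoMetricSpace X] {u a b : X} {r : ℝ}
    (hu : dist u a ≤ r) (hab : 2 * r ≤ dist a b) : dist u a ≤ dist u b := by
  linarith [dist_triangle_left a b u]

lemma min_gap_le_abs_sub_of_monotoneOn {N q k : ℕ} {y : ℕ → ℝ} (hy : MonotoneOn y (Set.Iic N))
    (hq : q ≤ N) (hk : k ≤ N) (hkq : k ≠ q) :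
    min (y q - y (q - 1)) (y (q + 1) - y q) ≤ |y k - y q| := by
  rcases hkq.lt_or_gt with hlt | hgt
  · have : y k ≤ y (q - 1) := hy (Set.mem_Iic.2 hk) (Set.mem_Iic.2 (by omega)) (by omega)
    rw [abs_sub_comm]
    exact (min_le_left _ _).trans (by linarith [le_abs_self (y q - y k)])
  · have : y (q + 1) ≤ y k := hy (Set.mem_Iic.2 (by omega)) (Set.mem_Iic.2 hk) hgt
    exact (min_le_right _ _).trans (by linarith [le_abs_self (y k - y q)])

lemma abs_ema_div_sub_le_s3 {β Δ y z : ℝ} (hβ : β ≤ 1) (hΔ : 0 < Δ) (hz : |z| ≤ Δ) (hy : |y| ≤ 1) :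
    |(β * y * Δ + (1 - β) * z) / Δ - y| ≤ 2 * (1 - β) := by
  have hstep : (β * y * Δ + (1 - β) * z) / Δ - y = (1 - β) * (z / Δ - y) := by
    field_simp
    ring
  have hzΔ : |z / Δ| ≤ 1 := by
    rwa [abs_div, abs_of_pos hΔ, div_le_one hΔ]
  have hdiff : |z / Δ - y| ≤ 2 := by
    linarith [abs_sub (z / Δ) y]
  rw [hstep, abs_mul, abs_of_nonneg (sub_nonneg.2 hβ), mul_comm]
  exact mul_le_mul_of_nonneg_right hdiff (sub_nonneg.2 hβ)

theorem signal_swamping_fixed_scale_signed_general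
    (N : ℕ) (y : ℕ → ℝ)
    (hmono : ∀ k, k < N → y k < y (k + 1))
    (hbound : ∀ k, k ≤ N → |y k| ≤ 1)
    (β : ℝ) (hβ1 : β < 1)
    (Δ : ℝ) (hΔ : 0 < Δ)
    (q : ℕ) (hqN : q < N)
    (hr : 2 * (1 - β) ≤ (1 / 2) * min (y q - y (q - 1)) (y (q + 1) - y q)) :
    ∀ z : ℝ, |z| ≤ Δ →
      ∀ k, k ≤ N →
        |(β * y q * Δ + (1 - β) * z) / Δ - y q|
          ≤ |(β * y q * Δ + (1 - β) * z) / Δ - y k| := by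
  intro z hz k hk
  rcases eq_or_ne k q with rfl | hkq
  · rfl
  have hy : MonotoneOn y (Set.Iic N) :=
    (strictMonoOn_Iic_of_lt_succ fun m hm ↦ by simpa using hmono m hm).monotoneOn
  have hclose := (abs_ema_div_sub_le_s3 hβ1.le hΔ hz (hbound q hqN.le)).trans hr
  have hgap := min_gap_le_abs_sub_of_monotoneOn hy hqN.le hk hkq
  simp only [← Real.dist_eq] at hclose hgap ⊢
  exact dist_le_dist_of_two_mul_le hclose (by rw [dist_comm]; linarith)

/-- With levels in `[-1,1]`, fixed scale `Δ`, and an interior index `q` whose radius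
`r_q = (1/2)·min (y q − y (q−1)) (y (q+1) − y q)` satisfies `r_q ≥ 2(1−β)`, any signal
`z` with `|z| ≤ Δ` is swamped: the quantized EMA state remains unchanged. -/
theorem signal_swamping_fixed_scale_signed
    (N : ℕ) (y : ℕ → ℝ)
    (hmono : ∀ k, k < N → y k < y (k + 1))
    (hbound : ∀ k, k ≤ N → |y k| ≤ 1)
    (β : ℝ) (hβ0 : 0 ≤ β) (hβ1 : β < 1)
    (Δ : ℝ) (hΔ : 0 < Δ)
    (q : ℕ) (hq0 : 0 < q) (hqN : q < N)
    (hr : 2 * (1 - β) ≤ (1 / 2) * min (y q - y (q - 1)) (y (q + 1) - y q)) :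
    ∀ z : ℝ, |z| ≤ Δ →
      ∀ k, k ≤ N →
        |(β * y q * Δ + (1 - β) * z) / Δ - y q|
          ≤ |(β * y q * Δ + (1 - β) * z) / Δ - y k| :=
  signal_swamping_fixed_scale_signed_general N y hmono hbound β hβ1 Δ hΔ q hqN hr
end

section
/- Consider b-bit unsigned linear quantization with levels y_k = k/(2^b − 1) for k ∈ {0, 1, ..., 2^b − 1}, where b ≥ 2 is a natural number. Suppose the scale factor Δ > 0 is unchanged across the update and the momentum satisfies β ≥ 1 − 1/(2(2^b − 1)) with β < 1. Then for every stored index q ∈ {0,...,2^b − 1} and every signal z with 0 ≤ z ≤ Δ, the quantized EMA state remains unchanged: setting u = (β·y_q·Δ + (1−β)·z)/Δ, one has |u − y_q| ≤ |u − y_k| for every k ∈ {0,...,2^b − 1}. In particular, for b = 2 any β ≥ 5/6 ≈ 0.833 causes every received signal to be swamped. -/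
/-!
The EMA step moves the stored level `y_q` to `y_q + (1 - β) (z / Δ - y_q)`, a displacement of
at most `1 - β ≤ 1 / (2 (2^b - 1))`, half the spacing of the grid. By the triangle inequality a
point within half the spacing of a grid point is at least as close to it as to any other.
-/

theorem dist_le_dist_of_two_mul_le_dist {X : Type*} [PseudoMetricSpace X] {x a c : X} {r : ℝ}
    (hxa : dist x a ≤ r) (hac : 2 * r ≤ dist a c) : dist x a ≤ dist x c := by
  linarith [dist_triangle_left a c x]

theorem inv_le_abs_intCast_div_sub_div {N : ℝ} (hN : 0 < N) {k q : ℤ} (hkq : k ≠ q) :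
    N⁻¹ ≤ |k / N - q / N| := by
  have hsep : (1 : ℝ) ≤ |(k : ℝ) - q| := by
    exact_mod_cast Int.one_le_abs (sub_ne_zero.mpr hkq)
  rw [div_sub_div_same, abs_div, abs_of_pos hN, inv_eq_one_div]
  gcongr

theorem abs_ema_sub_le {β y w : ℝ} (hβ : β ≤ 1) (hy : y ∈ Set.Icc (0 : ℝ) 1)
    (hw : w ∈ Set.Icc (0 : ℝ) 1) : |β * y + (1 - β) * w - y| ≤ 1 - β := by
  have hwy : |w - y| ≤ 1 :=
    abs_sub_le_iff.mpr ⟨by linarith [hw.2, hy.1], by linarith [hw.1, hy.2]⟩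
  calc |β * y + (1 - β) * w - y| = (1 - β) * |w - y| := by
        rw [show β * y + (1 - β) * w - y = (1 - β) * (w - y) by ring, abs_mul,
          abs_of_nonneg (sub_nonneg.mpr hβ)]
    _ ≤ 1 - β := mul_le_of_le_one_right (sub_nonneg.mpr hβ) hwy

theorem abs_ema_sub_level_le {N β w : ℝ} (hN : 0 < N) (hβlo : 1 - 1 / (2 * N) ≤ β)
    (hβ1 : β < 1) {q k : ℤ} (hq : (q / N : ℝ) ∈ Set.Icc (0 : ℝ) 1)
    (hw : w ∈ Set.Icc (0 : ℝ) 1) :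
    |β * (q / N) + (1 - β) * w - q / N| ≤ |β * (q / N) + (1 - β) * w - k / N| := by
  rcases eq_or_ne k q with rfl | hkq
  · rfl
  rw [← Real.dist_eq, ← Real.dist_eq]
  refine dist_le_dist_of_two_mul_le_dist (r := 1 - β)
    (by rw [Real.dist_eq]; exact abs_ema_sub_le hβ1.le hq hw) ?_
  calc 2 * (1 - β) ≤ N⁻¹ := by
        rw [inv_eq_one_div]; linarith [show 2 * (1 / (2 * N)) = 1 / N by field_simp]
    _ ≤ |k / N - q / N| := inv_le_abs_intCast_div_sub_div hN hkq
    _ = dist (q / N : ℝ) (k / N) := by rw [Real.dist_eq, abs_sub_comm]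

theorem signal_swamping_unsigned_linear_general
    (b : ℕ)
    (Δ : ℝ) (hΔ : 0 < Δ)
    (β : ℝ) (hβlo : 1 - 1 / (2 * ((2 : ℝ) ^ b - 1)) ≤ β) (hβ1 : β < 1) :
    ∀ q : ℕ, q ≤ 2 ^ b - 1 →
      ∀ z : ℝ, 0 ≤ z → z ≤ Δ →
        ∀ k : ℕ, k ≤ 2 ^ b - 1 →
          |(β * ((q : ℝ) / ((2 : ℝ) ^ b - 1)) * Δ + (1 - β) * z) / Δ
              - (q : ℝ) / ((2 : ℝ) ^ b - 1)|
            ≤ |(β * ((q : ℝ) / ((2 : ℝ) ^ b - 1)) * Δ + (1 - β) * z) / Δ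
              - (k : ℝ) / ((2 : ℝ) ^ b - 1)| := by
  intro q hq z hz0 hzΔ k hk
  rcases eq_or_ne k q with rfl | hkq
  · rfl
  have hN : (1 : ℝ) ≤ (2 : ℝ) ^ b - 1 := by
    have : 2 ≤ 2 ^ b := by omega -- two distinct levels `k ≠ q` force `b ≥ 1`
    linarith [show (2 : ℝ) ≤ 2 ^ b by exact_mod_cast this]
  have hqN : (q : ℝ) ≤ (2 : ℝ) ^ b - 1 := by
    have : q + 1 ≤ 2 ^ b := by omega
    linarith [show (q : ℝ) + 1 ≤ 2 ^ b by exact_mod_cast this]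
  have hlevel : ((q : ℤ) / ((2 : ℝ) ^ b - 1) : ℝ) ∈ Set.Icc (0 : ℝ) 1 := by
    push_cast
    exact ⟨by positivity, (div_le_one (by linarith)).mpr hqN⟩
  have hsignal : z / Δ ∈ Set.Icc (0 : ℝ) 1 := ⟨by positivity, (div_le_one hΔ).mpr hzΔ⟩
  have hnormalize : (β * ((q : ℝ) / ((2 : ℝ) ^ b - 1)) * Δ + (1 - β) * z) / Δ
      = β * ((q : ℝ) / ((2 : ℝ) ^ b - 1)) + (1 - β) * (z / Δ) := by
    field_simp
  rw [hnormalize]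
  exact_mod_cast abs_ema_sub_level_le (by linarith) hβlo hβ1 (k := k) hlevel hsignal

/-- `b`-bit unsigned linear quantization with levels `y k = k/(2^b − 1)`, `k = 0,…,2^b − 1`,
`b ≥ 2`: if the scale `Δ > 0` is unchanged and `β ≥ 1 − 1/(2(2^b − 1))` with `β < 1`,
then every stored index `q` and every signal `0 ≤ z ≤ Δ` is swamped — the quantized EMA
state remains unchanged. (In particular, for `b = 2` any `β ≥ 5/6` suffices.) -/
theorem signal_swamping_unsigned_linear
    (b : ℕ) (hb : 2 ≤ b)
    (Δ : ℝ) (hΔ : 0 < Δ)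
    (β : ℝ) (hβlo : 1 - 1 / (2 * ((2 : ℝ) ^ b - 1)) ≤ β) (hβ1 : β < 1) :
    ∀ q : ℕ, q ≤ 2 ^ b - 1 →
      ∀ z : ℝ, 0 ≤ z → z ≤ Δ →
        ∀ k : ℕ, k ≤ 2 ^ b - 1 →
          |(β * ((q : ℝ) / ((2 : ℝ) ^ b - 1)) * Δ + (1 - β) * z) / Δ
              - (q : ℝ) / ((2 : ℝ) ^ b - 1)|
            ≤ |(β * ((q : ℝ) / ((2 : ℝ) ^ b - 1)) * Δ + (1 - β) * z) / Δ
              - (k : ℝ) / ((2 : ℝ) ^ b - 1)| :=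
  signal_swamping_unsigned_linear_general b Δ hΔ β hβlo hβ1
end

section
/- Consider b-bit signed linear quantization with levels y_k = (k − M)/M for k ∈ {0, 1, ..., 2M}, where M = 2^{b−1} − 1 and b ≥ 3 is a natural number (so the levels are 0, ±1/M, ..., ±1). Suppose the scale factor Δ > 0 is unchanged across the update and the momentum satisfies β ≥ 1 − 1/(4(2^{b−1} − 1)) with β < 1. Then for every stored index q ∈ {0,...,2M} and every signal z with |z| ≤ Δ, the quantized EMA state remains unchanged: setting u = (β·y_q·Δ + (1−β)·z)/Δ, one has |u − y_q| ≤ |u − y_k| for every k ∈ {0,...,2M}. In particular, for b = 3 any β ≥ 11/12 ≈ 0.917 causes every received signal to be swamped. -/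
/-!
Writing `y_q` for the stored level and `w = z / Δ ∈ [-1, 1]`, the normalized update is
`u = y_q + (1 - β) (w - y_q)`. Since `|w - y_q| ≤ 2` and `1 - β ≤ 1 / (4M)`, `u` moves at most
`1 / (2M)` away from `y_q`, i.e. at most half the spacing `1 / M` of the levels, so `y_q` stays
a nearest level.
-/

noncomputable def signedLevel (M k : ℕ) : ℝ := ((k : ℝ) - M) / M

lemma abs_signedLevel_le_one {M k : ℕ} (hk : k ≤ 2 * M) : |signedLevel M k| ≤ 1 := by
  rcases M.eq_zero_or_pos with rfl | hM
  · simp [signedLevel]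
  have hM' : (0 : ℝ) < M := by exact_mod_cast hM
  have hk' : (k : ℝ) ≤ 2 * M := by exact_mod_cast hk
  rw [signedLevel, abs_div, abs_of_pos hM', div_le_one hM', abs_le]
  constructor <;> linarith [k.cast_nonneg (α := ℝ)]

lemma signedLevel_sub_signedLevel (M q k : ℕ) :
    signedLevel M q - signedLevel M k = ((q : ℝ) - k) / M := by
  unfold signedLevel
  ring

lemma inv_le_abs_signedLevel_sub {M q k : ℕ} (hqk : q ≠ k) :
    (M : ℝ)⁻¹ ≤ |signedLevel M q - signedLevel M k| := by
  have hgap : (1 : ℝ) ≤ |(q : ℝ) - k| := by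
    have : (1 : ℤ) ≤ |(q : ℤ) - k| := Int.one_le_abs (sub_ne_zero.mpr (by exact_mod_cast hqk))
    exact_mod_cast this
  rw [signedLevel_sub_signedLevel, abs_div, Nat.abs_cast, inv_eq_one_div]
  exact div_le_div_of_nonneg_right hgap M.cast_nonneg

lemma dist_le_dist_of_two_mul_dist_le {X : Type*} [PseudoMetricSpace X] {u a c : X}
    (h : 2 * dist u a ≤ dist a c) : dist u a ≤ dist u c := by
  linarith [dist_triangle_left a c u]

lemma ema_div_sub_eq {Δ : ℝ} (hΔ : Δ ≠ 0) (β y z : ℝ) :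
    (β * y * Δ + (1 - β) * z) / Δ - y = (1 - β) * (z / Δ - y) := by
  field_simp
  ring

lemma two_mul_abs_ema_perturbation_le {M : ℕ} {β w y : ℝ}
    (hβlo : 1 - 1 / (4 * M) ≤ β) (hβ1 : β < 1) (hw : |w| ≤ 1) (hy : |y| ≤ 1) :
    2 * |(1 - β) * (w - y)| ≤ (M : ℝ)⁻¹ := by
  have hwy : |w - y| ≤ 2 := by linarith [abs_sub w y]
  calc 2 * |(1 - β) * (w - y)| = 2 * (1 - β) * |w - y| := by
        rw [abs_mul, abs_of_pos (sub_pos.mpr hβ1), mul_assoc]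
    _ ≤ 2 * (1 / (4 * M)) * 2 := by gcongr; linarith
    _ = (M : ℝ)⁻¹ := by ring

theorem abs_ema_div_sub_signedLevel_le {M : ℕ} {Δ β z : ℝ} (hΔ : 0 < Δ)
    (hβlo : 1 - 1 / (4 * M) ≤ β) (hβ1 : β < 1) (hz : |z| ≤ Δ)
    {q k : ℕ} (hq : q ≤ 2 * M) (hk : k ≤ 2 * M) :
    |(β * signedLevel M q * Δ + (1 - β) * z) / Δ - signedLevel M q|
      ≤ |(β * signedLevel M q * Δ + (1 - β) * z) / Δ - signedLevel M k| := by
  rcases eq_or_ne q k with rfl | hqk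
  · rfl
  have hw : |z / Δ| ≤ 1 := by rwa [abs_div, abs_of_pos hΔ, div_le_one hΔ]
  have hclose := two_mul_abs_ema_perturbation_le hβlo hβ1 hw (abs_signedLevel_le_one hq)
  rw [← ema_div_sub_eq hΔ.ne'] at hclose
  have hhalf := hclose.trans (inv_le_abs_signedLevel_sub hqk)
  simp only [← Real.dist_eq] at hhalf ⊢
  exact dist_le_dist_of_two_mul_dist_le hhalf

theorem signal_swamping_signed_linear_general
    (b : ℕ)
    (Δ : ℝ) (hΔ : 0 < Δ)
    (β : ℝ) (hβlo : 1 - 1 / (4 * ((2 : ℝ) ^ (b - 1) - 1)) ≤ β) (hβ1 : β < 1) :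
    ∀ q : ℕ, q ≤ 2 * (2 ^ (b - 1) - 1) →
      ∀ z : ℝ, |z| ≤ Δ →
        ∀ k : ℕ, k ≤ 2 * (2 ^ (b - 1) - 1) →
          |(β * (((q : ℝ) - ((2 : ℝ) ^ (b - 1) - 1)) / ((2 : ℝ) ^ (b - 1) - 1)) * Δ
                + (1 - β) * z) / Δ
              - ((q : ℝ) - ((2 : ℝ) ^ (b - 1) - 1)) / ((2 : ℝ) ^ (b - 1) - 1)|
            ≤ |(β * (((q : ℝ) - ((2 : ℝ) ^ (b - 1) - 1)) / ((2 : ℝ) ^ (b - 1) - 1)) * Δ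
                + (1 - β) * z) / Δ
              - ((k : ℝ) - ((2 : ℝ) ^ (b - 1) - 1)) / ((2 : ℝ) ^ (b - 1) - 1)| := by
  intro q hq z hz k hk
  have hM : ((2 ^ (b - 1) - 1 : ℕ) : ℝ) = (2 : ℝ) ^ (b - 1) - 1 := by
    rw [Nat.cast_sub Nat.one_le_two_pow]
    push_cast
    rfl
  rw [← hM] at hβlo ⊢
  exact abs_ema_div_sub_signedLevel_le hΔ hβlo hβ1 hz hq hk

/-- `b`-bit signed linear quantization with levels `y k = (k − M)/M`, `k = 0,…,2M`,
`M = 2^(b−1) − 1`, `b ≥ 3`: if the scale `Δ > 0` is unchanged and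
`β ≥ 1 − 1/(4(2^(b−1) − 1))` with `β < 1`, then every stored index `q` and every signal
`|z| ≤ Δ` is swamped — the quantized EMA state remains unchanged.
(In particular, for `b = 3` any `β ≥ 11/12` suffices.) -/
theorem signal_swamping_signed_linear
    (b : ℕ) (hb : 3 ≤ b)
    (Δ : ℝ) (hΔ : 0 < Δ)
    (β : ℝ) (hβlo : 1 - 1 / (4 * ((2 : ℝ) ^ (b - 1) - 1)) ≤ β) (hβ1 : β < 1) :
    ∀ q : ℕ, q ≤ 2 * (2 ^ (b - 1) - 1) →
      ∀ z : ℝ, |z| ≤ Δ →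
        ∀ k : ℕ, k ≤ 2 * (2 ^ (b - 1) - 1) →
          |(β * (((q : ℝ) - ((2 : ℝ) ^ (b - 1) - 1)) / ((2 : ℝ) ^ (b - 1) - 1)) * Δ
                + (1 - β) * z) / Δ
              - ((q : ℝ) - ((2 : ℝ) ^ (b - 1) - 1)) / ((2 : ℝ) ^ (b - 1) - 1)|
            ≤ |(β * (((q : ℝ) - ((2 : ℝ) ^ (b - 1) - 1)) / ((2 : ℝ) ^ (b - 1) - 1)) * Δ
                + (1 - β) * z) / Δ
              - ((k : ℝ) - ((2 : ℝ) ^ (b - 1) - 1)) / ((2 : ℝ) ^ (b - 1) - 1)| :=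
  signal_swamping_signed_linear_general b Δ hΔ β hβlo hβ1
end

section
/- Let β ∈ [0,1), let y_0 < y_1 < ... < y_N be strictly increasing quantization levels with maximum radius r_max = max_{k=1,...,N} (1/2)·(y_k − y_{k−1}), let Δ > 0, and let x̂ satisfy y_{k−1}·Δ ≤ x̂ ≤ y_k·Δ for some k. Let X̃ = Δ·Ỹ be the dequantized stochastic rounding of x̂, where Ỹ takes value y_{k−1} with probability (y_k − x̂/Δ)/(y_k − y_{k−1}) and y_k with probability (x̂/Δ − y_{k−1})/(y_k − y_{k−1}), and let g be a real random variable independent of X̃. Define g̃ = g + (β/(1−β))·(X̃ − x̂). Then Var[g̃] = Var[g] + (β/(1−β))²·Var[X̃], and Var[X̃] = (y_k − x̂/Δ)·(x̂/Δ − y_{k−1})·Δ² ≤ (1/4)·(y_k − y_{k−1})²·Δ² ≤ (r_max·Δ)², so that Var[g̃] ≤ Var[g] + ((β/(1−β))·r_max·Δ)². -/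
/-!
Stochastic rounding of `x ∈ [l, u]` to `{l, u}` is unbiased, so its variance is
`(u - x) * (x - l)`, at most `((u - l) / 2) ^ 2` by Popoviciu's inequality; with scale `Δ` this is
at most `(rmax * Δ) ^ 2`. The effective gradient `g + c * (X - x̂)` is a sum of independent terms,
so its variance is `Var[g] + c ^ 2 * Var[X]`.
-/

open MeasureTheory ProbabilityTheory

namespace ProbabilityTheory

variable {Ω : Type*} [MeasurableSpace Ω] {μ : Measure Ω} [IsProbabilityMeasure μ]
  {X : Ω → ℝ} {a b : ℝ}

lemma ae_eq_or_eq_of_measure_add_eq_one (hX : Measurable X) (hab : a ≠ b)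
    (h : μ {ω | X ω = a} + μ {ω | X ω = b} = 1) : ∀ᵐ ω ∂μ, X ω = a ∨ X ω = b := by
  have hdisj : Disjoint {ω | X ω = a} {ω | X ω = b} :=
    Set.disjoint_left.2 fun ω ha hb => hab (ha.symm.trans hb)
  have hA : MeasurableSet {ω | X ω = a} := hX (measurableSet_singleton a)
  have hB : MeasurableSet {ω | X ω = b} := hX (measurableSet_singleton b)
  have hunion : μ ({ω | X ω = a} ∪ {ω | X ω = b}) = 1 := by rwa [measure_union hdisj hB]
  exact ae_iff.2 ((prob_compl_eq_zero_iff (hA.union hB)).2 hunion)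

lemma integral_eq_of_ae_eq_or_eq (hX : Measurable X) (hab : a ≠ b)
    (h : ∀ᵐ ω ∂μ, X ω = a ∨ X ω = b) :
    μ[X] = a * μ.real {ω | X ω = a} + b * μ.real {ω | X ω = b} := by
  have hA : MeasurableSet {ω | X ω = a} := hX (measurableSet_singleton a)
  have hB : MeasurableSet {ω | X ω = b} := hX (measurableSet_singleton b)
  have hsplit : X =ᵐ[μ] fun ω => {ω | X ω = a}.indicator (fun _ => a) ω
      + {ω | X ω = b}.indicator (fun _ => b) ω := by
    filter_upwards [h] with ω hω
    rcases hω with hω | hω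
    · simp [Set.indicator, hω, hab]
    · simp [Set.indicator, hω, hab.symm]
  rw [integral_congr_ae hsplit, integral_add ((integrable_const a).indicator hA)
    ((integrable_const b).indicator hB), integral_indicator_const a hA,
    integral_indicator_const b hB, smul_eq_mul, smul_eq_mul, mul_comm a, mul_comm b]

/-- Equality case of the Bhatia–Davis inequality `ProbabilityTheory.variance_le_sub_mul_sub`. -/
lemma variance_eq_sub_mul_sub_of_ae_eq_or_eq (hX : AEMeasurable X μ)
    (h : ∀ᵐ ω ∂μ, X ω = a ∨ X ω = b) : variance X μ = (b - μ[X]) * (μ[X] - a) := by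
  have hX2 : MemLp X 2 μ := by
    refine MemLp.of_bound hX.aestronglyMeasurable (max |a| |b|) ?_
    filter_upwards [h] with ω hω
    rcases hω with hω | hω <;> simp [hω]
  have hsq : μ[X ^ 2] = (a + b) * μ[X] - a * b := by
    have hquad : X ^ 2 =ᵐ[μ] fun ω => (a + b) * X ω - a * b := by
      filter_upwards [h] with ω hω
      rcases hω with hω | hω <;> simp only [Pi.pow_apply, hω] <;> ring
    rw [integral_congr_ae hquad, integral_sub ((hX2.integrable one_le_two).const_mul _)
      (integrable_const _), integral_const_mul, integral_const, probReal_univ, one_smul]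
  rw [variance_eq_sub hX2, hsq]
  ring

def IsStochasticRounding (μ : Measure Ω) (X : Ω → ℝ) (l u x : ℝ) : Prop :=
  μ {ω | X ω = l} = ENNReal.ofReal ((u - x) / (u - l)) ∧
    μ {ω | X ω = u} = ENNReal.ofReal ((x - l) / (u - l))

namespace IsStochasticRounding

variable {l u x : ℝ}

lemma ae_eq_or_eq (h : IsStochasticRounding μ X l u x) (hX : Measurable X) (hlu : l < u)
    (hl : l ≤ x) (hu : x ≤ u) : ∀ᵐ ω ∂μ, X ω = l ∨ X ω = u := by
  refine ae_eq_or_eq_of_measure_add_eq_one hX hlu.ne ?_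
  rw [h.1, h.2, ← ENNReal.ofReal_add (div_nonneg (by linarith) (by linarith))
    (div_nonneg (by linarith) (by linarith)), ← add_div, sub_add_sub_cancel,
    div_self (sub_pos.2 hlu).ne', ENNReal.ofReal_one]

lemma ae_mem_Icc (h : IsStochasticRounding μ X l u x) (hX : Measurable X) (hlu : l < u)
    (hl : l ≤ x) (hu : x ≤ u) : ∀ᵐ ω ∂μ, X ω ∈ Set.Icc l u := by
  filter_upwards [h.ae_eq_or_eq hX hlu hl hu] with ω hω
  rcases hω with hω | hω <;> simp [hω, hlu.le]

lemma integral_eq (h : IsStochasticRounding μ X l u x) (hX : Measurable X) (hlu : l < u)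
    (hl : l ≤ x) (hu : x ≤ u) : μ[X] = x := by
  rw [integral_eq_of_ae_eq_or_eq hX hlu.ne (h.ae_eq_or_eq hX hlu hl hu), measureReal_def,
    measureReal_def, h.1, h.2, ENNReal.toReal_ofReal (div_nonneg (by linarith) (by linarith)),
    ENNReal.toReal_ofReal (div_nonneg (by linarith) (by linarith))]
  field_simp [(sub_pos.2 hlu).ne']
  ring

lemma variance_eq (h : IsStochasticRounding μ X l u x) (hX : Measurable X) (hlu : l < u)
    (hl : l ≤ x) (hu : x ≤ u) : variance X μ = (u - x) * (x - l) := by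
  rw [variance_eq_sub_mul_sub_of_ae_eq_or_eq hX.aemeasurable (h.ae_eq_or_eq hX hlu hl hu),
    h.integral_eq hX hlu hl hu]

end IsStochasticRounding

lemma IndepFun.variance_add_const_mul_sub {g : Ω → ℝ} (hg : MemLp g 2 μ) (hX : MemLp X 2 μ)
    (hind : IndepFun g X μ) (c x : ℝ) :
    variance (fun ω => g ω + c * (X ω - x)) μ = variance g μ + c ^ 2 * variance X μ := by
  have hind' : IndepFun g (fun ω => c * (X ω - x)) μ :=
    hind.comp measurable_id ((measurable_id.sub_const x).const_mul c)
  have hX' : MemLp (fun ω => c * (X ω - x)) 2 μ := (hX.sub (memLp_const x)).const_mul c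
  rw [hind'.variance_fun_add hg hX', variance_const_mul,
    variance_sub_const hX.aestronglyMeasurable]

end ProbabilityTheory

open ProbabilityTheory

theorem quantized_ema_gradient_variance_general
    {Ω : Type*} [MeasurableSpace Ω] (μ : Measure Ω) [IsProbabilityMeasure μ]
    (β : ℝ)
    (N : ℕ) (y : ℕ → ℝ) (hmono : ∀ j, j < N → y j < y (j + 1))
    (rmax : ℝ)
    (hrmax : IsGreatest {r : ℝ | ∃ j, 1 ≤ j ∧ j ≤ N ∧ r = (y j - y (j - 1)) / 2} rmax)
    (Δ : ℝ) (hΔ : 0 < Δ)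
    (k : ℕ) (hk1 : 1 ≤ k) (hkN : k ≤ N)
    (xhat : ℝ) (hx0 : y (k - 1) * Δ ≤ xhat) (hx1 : xhat ≤ y k * Δ)
    (X g : Ω → ℝ) (hXmeas : Measurable X)
    (hX0 : μ {ω | X ω = Δ * y (k - 1)}
        = ENNReal.ofReal ((y k - xhat / Δ) / (y k - y (k - 1))))
    (hX1 : μ {ω | X ω = Δ * y k}
        = ENNReal.ofReal ((xhat / Δ - y (k - 1)) / (y k - y (k - 1))))
    (hg2 : MemLp g 2 μ)
    (hindep : IndepFun g X μ) :
    variance (fun ω => g ω + (β / (1 - β)) * (X ω - xhat)) μ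
        = variance g μ + (β / (1 - β)) ^ 2 * variance X μ ∧
    variance X μ = (y k - xhat / Δ) * (xhat / Δ - y (k - 1)) * Δ ^ 2 ∧
    variance X μ ≤ (1 / 4) * (y k - y (k - 1)) ^ 2 * Δ ^ 2 ∧
    variance X μ ≤ (rmax * Δ) ^ 2 ∧
    variance (fun ω => g ω + (β / (1 - β)) * (X ω - xhat)) μ
        ≤ variance g μ + ((β / (1 - β)) * rmax * Δ) ^ 2 := by
  have hy : y (k - 1) < y k := by simpa [Nat.sub_add_cancel hk1] using hmono (k - 1) (by omega)
  have hlu : Δ * y (k - 1) < Δ * y k := mul_lt_mul_of_pos_left hy hΔ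
  have hl : Δ * y (k - 1) ≤ xhat := by linarith
  have hu : xhat ≤ Δ * y k := by linarith
  have hSR : IsStochasticRounding μ X (Δ * y (k - 1)) (Δ * y k) xhat := by
    constructor
    · rw [hX0]; congr 1; field_simp
    · rw [hX1]; congr 1; field_simp
  have hIcc := hSR.ae_mem_Icc hXmeas hlu hl hu
  have hvar : variance X μ = (y k - xhat / Δ) * (xhat / Δ - y (k - 1)) * Δ ^ 2 := by
    rw [hSR.variance_eq hXmeas hlu hl hu]
    field_simp
  have hpopoviciu : variance X μ ≤ (1 / 4) * (y k - y (k - 1)) ^ 2 * Δ ^ 2 :=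
    (variance_le_sq_of_bounded hIcc hXmeas.aemeasurable).trans_eq (by ring)
  have hradius : (1 / 4) * (y k - y (k - 1)) ^ 2 * Δ ^ 2 ≤ (rmax * Δ) ^ 2 := by
    have hr : (y k - y (k - 1)) / 2 ≤ rmax := hrmax.2 ⟨k, hk1, hkN, rfl⟩
    calc (1 / 4) * (y k - y (k - 1)) ^ 2 * Δ ^ 2 = ((y k - y (k - 1)) / 2 * Δ) ^ 2 := by ring
      _ ≤ (rmax * Δ) ^ 2 := by gcongr
  have hgrad := hindep.variance_add_const_mul_sub hg2
    (memLp_of_bounded hIcc hXmeas.aestronglyMeasurable 2) (β / (1 - β)) xhat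
  refine ⟨hgrad, hvar, hpopoviciu, hpopoviciu.trans hradius, ?_⟩
  rw [hgrad, show (β / (1 - β) * rmax * Δ) ^ 2 = (β / (1 - β)) ^ 2 * (rmax * Δ) ^ 2 by ring]
  gcongr
  exact hpopoviciu.trans hradius

/-- (Theorem: quantization errors amplify the gradient variance.)
Let `β ∈ [0,1)`, let `y 0 < y 1 < ... < y N` be strictly increasing quantization levels
with maximum radius `rmax = max_{1 ≤ j ≤ N} (y j − y (j−1))/2`, let `Δ > 0`, and let
`x̂ ∈ [y (k−1)·Δ, y k·Δ]`. Let `X = Δ·Ỹ` be the dequantized stochastic rounding of `x̂`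
(so `X = Δ·y (k−1)` w.p. `(y k − x̂/Δ)/(y k − y (k−1))` and `X = Δ·y k` w.p.
`(x̂/Δ − y (k−1))/(y k − y (k−1))`), and let `g` be a square-integrable real random
variable independent of `X`. With `g̃ = g + (β/(1−β))·(X − x̂)`:
`Var[g̃] = Var[g] + (β/(1−β))²·Var[X]`,
`Var[X] = (y k − x̂/Δ)·(x̂/Δ − y (k−1))·Δ² ≤ (1/4)·(y k − y (k−1))²·Δ² ≤ (rmax·Δ)²`,
hence `Var[g̃] ≤ Var[g] + ((β/(1−β))·rmax·Δ)²`. -/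
theorem quantized_ema_gradient_variance
    {Ω : Type*} [MeasurableSpace Ω] (μ : Measure Ω) [IsProbabilityMeasure μ]
    (β : ℝ) (hβ0 : 0 ≤ β) (hβ1 : β < 1)
    (N : ℕ) (y : ℕ → ℝ) (hmono : ∀ j, j < N → y j < y (j + 1))
    (rmax : ℝ)
    (hrmax : IsGreatest {r : ℝ | ∃ j, 1 ≤ j ∧ j ≤ N ∧ r = (y j - y (j - 1)) / 2} rmax)
    (Δ : ℝ) (hΔ : 0 < Δ)
    (k : ℕ) (hk1 : 1 ≤ k) (hkN : k ≤ N)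
    (xhat : ℝ) (hx0 : y (k - 1) * Δ ≤ xhat) (hx1 : xhat ≤ y k * Δ)
    (X g : Ω → ℝ) (hXmeas : Measurable X) (hgmeas : Measurable g)
    (hX0 : μ {ω | X ω = Δ * y (k - 1)}
        = ENNReal.ofReal ((y k - xhat / Δ) / (y k - y (k - 1))))
    (hX1 : μ {ω | X ω = Δ * y k}
        = ENNReal.ofReal ((xhat / Δ - y (k - 1)) / (y k - y (k - 1))))
    (hg2 : MemLp g 2 μ)
    (hindep : IndepFun g X μ) :
    variance (fun ω => g ω + (β / (1 - β)) * (X ω - xhat)) μ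
        = variance g μ + (β / (1 - β)) ^ 2 * variance X μ ∧
    variance X μ = (y k - xhat / Δ) * (xhat / Δ - y (k - 1)) * Δ ^ 2 ∧
    variance X μ ≤ (1 / 4) * (y k - y (k - 1)) ^ 2 * Δ ^ 2 ∧
    variance X μ ≤ (rmax * Δ) ^ 2 ∧
    variance (fun ω => g ω + (β / (1 - β)) * (X ω - xhat)) μ
        ≤ variance g μ + ((β / (1 - β)) * rmax * Δ) ^ 2 :=
  quantized_ema_gradient_variance_general μ β N y hmono rmax hrmax Δ hΔ k hk1 hkN xhat hx0 hx1 X g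
    hXmeas hX0 hX1 hg2 hindep
end
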